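/- Let Y be an ANR_{B0}-space and let Z be a compact metric space. Then the space C_{B0}(Z, Y), equipped with the compact-open topology and with the projection π(f) = π_Y(f(z)) (independent of z ∈ Z), is an ANR_{B0}-space. -/

import Mathlib

open Set Topology TopologicalSpace unitInterval

universe u

/-- `f` is a fiber preserving (f.p.) map from `(X, πX)` to `(Y, πY)` over `B0`. -/
def IsFPMap {B0 X Y : Type u} [TopologicalSpace B0] [TopologicalSpace X] [TopologicalSpace Y]
    (πX : X → B0) (πY : Y → B0) (f : X → Y) : Prop :=
  Continuous f ∧ ∀ x, πY (f x) = πX x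

/-- Two f.p. maps are f.p. homotopic (homotopic over `B0`). -/
def FPHomotopic {B0 X Y : Type u} [TopologicalSpace B0] [TopologicalSpace X] [TopologicalSpace Y]
    (πX : X → B0) (πY : Y → B0) (f g : X → Y) : Prop :=
  ∃ H : X × unitInterval → Y, Continuous H ∧
    (∀ x, H (x, 0) = f x) ∧ (∀ x, H (x, 1) = g x) ∧
    ∀ x t, πY (H (x, t)) = πX x

/-- A metrizable space `(Y, πY)` over `B0` is an absolute neighbourhood retract over `B0`:
for every closed f.p. embedding into a metrizable space over `B0` there is a neighbourhood of the
image and an f.p. retraction of that neighbourhood onto the image. -/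
def IsFiberANR (B0 : Type u) [TopologicalSpace B0] (Y : Type u) [TopologicalSpace Y]
    (πY : Y → B0) : Prop :=
  MetrizableSpace Y ∧ Continuous πY ∧
  ∀ (X : Type u) (_ : TopologicalSpace X), MetrizableSpace X →
    ∀ πX : X → B0, Continuous πX →
    ∀ i : Y → X, IsClosedEmbedding i → (∀ y, πX (i y) = πY y) →
    ∃ U : Set X, U ∈ nhdsSet (Set.range i) ∧
    ∃ r : U → X, Continuous r ∧ (∀ u : U, r u ∈ Set.range i) ∧
      (∀ u : U, πX (r u) = πX u) ∧ ∀ u : U, (u : X) ∈ Set.range i → r u = u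

/-- A metrizable space `(Y, πY)` over `B0` is an absolute neighbourhood extensor over `B0`. -/
def IsFiberANE (B0 : Type u) [TopologicalSpace B0] (Y : Type u) [TopologicalSpace Y]
    (πY : Y → B0) : Prop :=
  MetrizableSpace Y ∧ Continuous πY ∧
  ∀ (X : Type u) (_ : TopologicalSpace X), MetrizableSpace X →
    ∀ πX : X → B0, Continuous πX →
    ∀ A : Set X, IsClosed A →
    ∀ f : A → Y, Continuous f → (∀ a : A, πY (f a) = πX a) →
    ∃ U : Set X, U ∈ nhdsSet A ∧
    ∃ g : U → Y, Continuous g ∧ (∀ u : U, πY (g u) = πX u) ∧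
      ∀ (a : X) (ha : a ∈ A) (hu : a ∈ U), g ⟨a, hu⟩ = f ⟨a, ha⟩

/-- An open cover of a topological space. -/
def IsOpenCover {Y : Type u} [TopologicalSpace Y] (𝒰 : Set (Set Y)) : Prop :=
  (∀ V ∈ 𝒰, IsOpen V) ∧ ⋃₀ 𝒰 = Set.univ

/-- Two maps are `𝒰`-near. -/
def UNear {X Y : Type u} (𝒰 : Set (Set Y)) (f g : X → Y) : Prop :=
  ∀ x, ∃ V ∈ 𝒰, f x ∈ V ∧ g x ∈ V

/-- The (topological) weight of a space: the least cardinality of a basis of its topology. -/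
noncomputable def tweight (X : Type u) [TopologicalSpace X] : Cardinal.{u} :=
  sInf {c | ∃ B : Set (Set X), IsTopologicalBasis B ∧ Cardinal.mk B = c}

/-- An inverse system in `Top_{B0}`: a directed set of indices, spaces over `B0` and f.p.
bonding maps. -/
structure FibInvSys (B0 : Type u) [TopologicalSpace B0] : Type (u + 1) where
  Idx : Type u
  le : Idx → Idx → Prop
  le_refl : ∀ a, le a a
  le_trans : ∀ a b c, le a b → le b c → le a c
  directed : ∀ a b, ∃ c, le a c ∧ le b c
  obj : Idx → Type u
  topInst : ∀ a, TopologicalSpace (obj a)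
  proj : ∀ a, obj a → B0
  proj_cont : ∀ a, @Continuous _ _ (topInst a) _ (proj a)
  bond : ∀ a a', le a a' → obj a' → obj a
  bond_cont : ∀ a a' (h : le a a'), @Continuous _ _ (topInst a') (topInst a) (bond a a' h)
  bond_fp : ∀ a a' (h : le a a') (x : obj a'), proj a (bond a a' h x) = proj a' x
  bond_id : ∀ a (x : obj a), bond a a (le_refl a) x = x
  bond_comp : ∀ a a' a'' (h : le a a') (h' : le a' a'') (x : obj a''),
    bond a a' h (bond a' a'' h' x) = bond a a'' (le_trans a a' a'' h h') x

attribute [instance] FibInvSys.topInst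

/-- A morphism from a space `(X, πX)` over `B0` to an inverse system in `Top_{B0}`. -/
structure FibMapToSys {B0 : Type u} [TopologicalSpace B0] (X : Type u) [TopologicalSpace X]
    (πX : X → B0) (S : FibInvSys B0) where
  maps : ∀ a : S.Idx, X → S.obj a
  cont : ∀ a, Continuous (maps a)
  fp : ∀ a x, S.proj a (maps a x) = πX x
  comm : ∀ a a' (h : S.le a a') (x : X), S.bond a a' h (maps a' x) = maps a x

section Conditions

variable {B0 : Type u} [TopologicalSpace B0] (X : Type u) [TopologicalSpace X]
  (πX : X → B0) (S : FibInvSys B0)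

/-- Condition (R1) of a resolution over `B0`. -/
def CondR1 (p : FibMapToSys X πX S) : Prop :=
  ∀ (P : Type u) (_ : TopologicalSpace P) (πP : P → B0), IsFiberANR B0 P πP →
    ∀ 𝒰 : Set (Set P), IsOpenCover 𝒰 →
    ∀ h : X → P, IsFPMap πX πP h →
    ∃ (a : S.Idx) (f : S.obj a → P), IsFPMap (S.proj a) πP f ∧
      UNear 𝒰 h fun x => f (p.maps a x)

/-- Condition (R2) of a resolution over `B0`. -/
def CondR2 (p : FibMapToSys X πX S) : Prop :=
  ∀ (P : Type u) (_ : TopologicalSpace P) (πP : P → B0), IsFiberANR B0 P πP →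
    ∀ 𝒰 : Set (Set P), IsOpenCover 𝒰 →
    ∃ 𝒰' : Set (Set P), IsOpenCover 𝒰' ∧
      ∀ (a : S.Idx) (f f' : S.obj a → P), IsFPMap (S.proj a) πP f → IsFPMap (S.proj a) πP f' →
        UNear 𝒰' (fun x => f (p.maps a x)) (fun x => f' (p.maps a x)) →
        ∃ (a' : S.Idx) (h : S.le a a'),
          UNear 𝒰 (fun y => f (S.bond a a' h y)) fun y => f' (S.bond a a' h y)

/-- `p` is a resolution over `B0`. -/
def IsFibResolution (p : FibMapToSys X πX S) : Prop :=
  CondR1 X πX S p ∧ CondR2 X πX S p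

/-- Condition (E1) of an expansion over `B0`. -/
def CondE1 (p : FibMapToSys X πX S) : Prop :=
  ∀ (P : Type u) (_ : TopologicalSpace P) (πP : P → B0), IsFiberANR B0 P πP →
    ∀ f : X → P, IsFPMap πX πP f →
    ∃ (a : S.Idx) (h : S.obj a → P), IsFPMap (S.proj a) πP h ∧
      FPHomotopic πX πP (fun x => h (p.maps a x)) f

/-- Condition (E2) of an expansion over `B0`. -/
def CondE2 (p : FibMapToSys X πX S) : Prop :=
  ∀ (P : Type u) (_ : TopologicalSpace P) (πP : P → B0), IsFiberANR B0 P πP →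
    ∀ (a : S.Idx) (f f' : S.obj a → P), IsFPMap (S.proj a) πP f → IsFPMap (S.proj a) πP f' →
      FPHomotopic πX πP (fun x => f (p.maps a x)) (fun x => f' (p.maps a x)) →
      ∃ (a' : S.Idx) (h : S.le a a'),
        FPHomotopic (S.proj a') πP (fun y => f (S.bond a a' h y)) fun y => f' (S.bond a a' h y)

/-- Two f.p. homotopies `S, T : X × I → P` are f.p. homotopic rel `X × ∂I`. -/
def FPHomotopicRelEnds {P : Type u} [TopologicalSpace P] (πP : P → B0)
    (S T : X × unitInterval → P) : Prop :=
  ∃ G : (X × unitInterval) × unitInterval → P, Continuous G ∧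
    (∀ z, G (z, 0) = S z) ∧ (∀ z, G (z, 1) = T z) ∧
    (∀ z s, πP (G (z, s)) = πX z.1) ∧
    (∀ x s, G ((x, 0), s) = S (x, 0)) ∧ ∀ x s, G ((x, 1), s) = S (x, 1)

/-- Condition (SE2) of a strong expansion over `B0`. -/
def CondSE2 (p : FibMapToSys X πX S) : Prop :=
  ∀ (P : Type u) (_ : TopologicalSpace P) (πP : P → B0), IsFiberANR B0 P πP →
    ∀ (a : S.Idx) (f0 f1 : S.obj a → P), IsFPMap (S.proj a) πP f0 → IsFPMap (S.proj a) πP f1 →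
    ∀ Sh : X × unitInterval → P, Continuous Sh → (∀ x t, πP (Sh (x, t)) = πX x) →
      (∀ x, Sh (x, 0) = f0 (p.maps a x)) → (∀ x, Sh (x, 1) = f1 (p.maps a x)) →
      ∃ (a' : S.Idx) (h : S.le a a') (H : S.obj a' × unitInterval → P),
        Continuous H ∧ (∀ z t, πP (H (z, t)) = S.proj a' z) ∧
        (∀ z, H (z, 0) = f0 (S.bond a a' h z)) ∧
        (∀ z, H (z, 1) = f1 (S.bond a a' h z)) ∧
        FPHomotopicRelEnds X πX πP Sh fun zt => H (p.maps a' zt.1, zt.2)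

/-- `p` is a strong expansion over `B0`. -/
def IsFibStrongExpansion (p : FibMapToSys X πX S) : Prop :=
  CondE1 X πX S p ∧ CondSE2 X πX S p

end Conditions

/-!
Over `B0` an ANR is an ANE. Embed `Y` as a closed f.p. subspace of `B0 × conv κ(Y)` by
`y ↦ (πY y, κ y)`, where `κ y = dist y · - dist y₀ ·` is the Kuratowski isometry into bounded
functions; `κ(Y)` is closed in its convex hull (Wojdysławski). A map `f : A → Y` on a closed set
extends to `X → conv κ(Y)` by Dugundji's theorem, and the f.p. retraction of a neighbourhood of the
image of `Y` carries the extension back to `Y`.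

Given a closed f.p. embedding `i` of `C_{B0}(Z, Y)` into `X`, the map `(i f, z) ↦ f z` is f.p. on
the closed set `i(C_{B0}(Z, Y)) × Z` of `X × Z`. Extend it over a neighbourhood, which contains a
tube `U × Z` since `Z` is compact, and curry: this is an f.p. retraction `U → C_{B0}(Z, Y)`.
-/

open Metric Filter

section Dugundji

variable {X E : Type*} [MetricSpace X] [NormedAddCommGroup E] [NormedSpace ℝ E] {A : Set X}

/-- The support of `φ i` lies in the ball around `i` of radius `infDist i A / 2`, and `a i` is a
point of `A` within `2 * infDist i A` of `i`; the triangle inequality then gives the factor `6`. -/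
theorem exists_partitionOfUnity_compl_dist_le (hA : IsClosed A) (hne : A.Nonempty) :
    ∃ (φ : PartitionOfUnity (↥Aᶜ) (↥Aᶜ)) (a : ↥Aᶜ → A),
      ∀ i x, φ i x ≠ 0 → ∀ b ∈ A, dist (a i : X) b ≤ 6 * dist (x : X) b := by
  have hpos : ∀ x : ↥Aᶜ, 0 < infDist (x : X) A := fun x =>
    (hA.notMem_iff_infDist_pos hne).1 x.2
  set U : ↥Aᶜ → Set ↥Aᶜ := fun i => {x | dist (x : X) i < infDist (i : X) A / 2}
  have hUo : ∀ i, IsOpen (U i) := fun i =>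
    isOpen_lt (continuous_subtype_val.dist continuous_const) continuous_const
  have hUc : univ ⊆ ⋃ i, U i := fun x _ =>
    mem_iUnion.2 ⟨x, by simpa [U] using hpos x⟩
  obtain ⟨φ, hφ⟩ := PartitionOfUnity.exists_isSubordinate isClosed_univ U hUo hUc
  have hnear : ∀ i : ↥Aᶜ, ∃ a : A, dist (i : X) a < 2 * infDist (i : X) A := fun i => by
    obtain ⟨a, ha, hdist⟩ := (infDist_lt_iff hne).1 (by linarith [hpos i] :
      infDist (i : X) A < 2 * infDist (i : X) A)
    exact ⟨⟨a, ha⟩, hdist⟩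
  choose a ha using hnear
  refine ⟨φ, a, fun i x hix b hb => ?_⟩
  have hxi : dist (x : X) i < infDist (i : X) A / 2 := hφ i (subset_tsupport _ hix)
  have hi : infDist (i : X) A ≤ infDist (x : X) A + dist (i : X) x := infDist_le_infDist_add_dist
  have hx : infDist (x : X) A ≤ dist (x : X) b := infDist_le_dist_of_mem hb
  have := dist_triangle4 (a i : X) i x b
  rw [dist_comm (x : X)] at hxi
  linarith [ha i, dist_comm (a i : X) i]

theorem exists_continuous_extension_mem_convexHull (hA : IsClosed A) (hne : A.Nonempty)
    {f : A → E} (hf : Continuous f) :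
    ∃ g : X → E, Continuous g ∧ (∀ a : A, g a = f a) ∧ ∀ x, g x ∈ convexHull ℝ (range f) := by
  classical
  obtain ⟨φ, a, hφa⟩ := exists_partitionOfUnity_compl_dist_le hA hne
  set h : ↥Aᶜ → E := fun x => ∑ᶠ i, φ i x • f (a i)
  have hh : Continuous h := φ.continuous_finsum_smul fun _ _ _ => continuousAt_const
  have hh_mem : ∀ x t, Convex ℝ t → (∀ i, φ i x ≠ 0 → f (a i) ∈ t) → h x ∈ t :=
    fun x t ht hft => φ.finsum_smul_mem_convex (g := fun i _ => f (a i)) (mem_univ x) hft ht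
  set g : X → E := fun x => if hx : x ∈ A then f ⟨x, hx⟩ else h ⟨x, hx⟩
  have hgA : ∀ x (hx : x ∈ A), g x = f ⟨x, hx⟩ := fun x hx => dif_pos hx
  have hgAc : ∀ x (hx : x ∉ A), g x = h ⟨x, hx⟩ := fun x hx => dif_neg hx
  refine ⟨g, continuous_iff_continuousAt.2 fun x₀ => ?_, fun b => hgA b b.2, fun x => ?_⟩
  · by_cases hx₀ : x₀ ∈ A
    · rw [Metric.continuousAt_iff]
      intro ε hε
      obtain ⟨δ, hδ, hfδ⟩ := Metric.continuous_iff.1 hf ⟨x₀, hx₀⟩ (ε / 2) (half_pos hε)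
      refine ⟨δ / 6, by positivity, fun {x} hx => ?_⟩
      have hnear : ∀ b (hb : b ∈ A), dist b x₀ ≤ 6 * dist x x₀ →
          dist (f ⟨b, hb⟩) (f ⟨x₀, hx₀⟩) ≤ ε / 2 := fun b hb hb6 =>
        (hfδ ⟨b, hb⟩ (by rw [Subtype.dist_eq]; linarith)).le
      rw [hgA x₀ hx₀]
      by_cases hxA : x ∈ A
      · rw [hgA x hxA]
        linarith [hnear x hxA (by linarith [dist_nonneg (x := x) (y := x₀)])]
      · rw [hgAc x hxA]
        refine lt_of_le_of_lt (mem_closedBall.1 <| hh_mem _ _ (convex_closedBall _ _)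
          fun i hi => mem_closedBall.2 ?_) (half_lt_self hε)
        exact hnear _ (a i).2 (hφa i ⟨x, hxA⟩ hi x₀ hx₀)
    · have : ContinuousOn g Aᶜ := by
        rw [continuousOn_iff_continuous_domRestrict]
        exact (funext fun x => hgAc x x.2 : Aᶜ.domRestrict g = h) ▸ hh
      exact this.continuousAt (hA.isOpen_compl.mem_nhds hx₀)
  · by_cases hx : x ∈ A
    · exact hgA x hx ▸ subset_convexHull ℝ _ (mem_range_self _)
    · exact hgAc x hx ▸ hh_mem _ _ (convex_convexHull ℝ _)
        fun i _ => subset_convexHull ℝ _ (mem_range_self _)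

end Dugundji

section Kuratowski

open scoped BoundedContinuousFunction

variable {Y : Type*} [MetricSpace Y]

noncomputable def kuratowskiBCF (y₀ y : Y) : Y →ᵇ ℝ :=
  .mkOfBound ⟨fun z => dist y z - dist y₀ z, by fun_prop⟩ (2 * dist y y₀) fun z w => by
    have hz := abs_dist_sub_le y y₀ z
    have hw := abs_dist_sub_le y y₀ w
    rw [Real.dist_eq]
    exact (abs_sub _ _).trans ((add_le_add hz hw).trans_eq (two_mul _).symm)

theorem kuratowskiBCF_apply (y₀ y z : Y) : kuratowskiBCF y₀ y z = dist y z - dist y₀ z := rfl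

theorem isometry_kuratowskiBCF (y₀ : Y) : Isometry (kuratowskiBCF y₀) := by
  refine Isometry.of_dist_eq fun y y' => le_antisymm ?_ ?_
  · refine (BoundedContinuousFunction.dist_le dist_nonneg).2 fun z => ?_
    rw [Real.dist_eq, kuratowskiBCF_apply, kuratowskiBCF_apply, sub_sub_sub_cancel_right]
    exact abs_dist_sub_le _ _ _
  · have := (kuratowskiBCF y₀ y).dist_coe_le_dist (g := kuratowskiBCF y₀ y') y'
    simpa [Real.dist_eq, kuratowskiBCF_apply] using this

theorem mul_dist_le_dist_kuratowskiBCF_affineCombination (y₀ : Y) {s : Finset Y} {w : Y → ℝ}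
    (hw₀ : ∀ i ∈ s, 0 ≤ w i) (hw₁ : ∑ i ∈ s, w i = 1) {i : Y} (hi : i ∈ s) (y : Y) :
    w i * dist i y ≤ dist (kuratowskiBCF y₀ y) (s.affineCombination ℝ (kuratowskiBCF y₀) w) := by
  set c := s.affineCombination ℝ (kuratowskiBCF y₀) w
  have hc : c y - kuratowskiBCF y₀ y y = ∑ j ∈ s, w j * dist j y := by
    simp only [c, s.affineCombination_eq_linear_combination _ _ hw₁,
      BoundedContinuousFunction.coe_sum, Finset.sum_apply, BoundedContinuousFunction.coe_smul,
      smul_eq_mul, kuratowskiBCF_apply, dist_self, mul_sub, Finset.sum_sub_distrib,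
      ← Finset.sum_mul, hw₁]
    ring
  calc w i * dist i y ≤ ∑ j ∈ s, w j * dist j y :=
        Finset.single_le_sum (f := fun j => w j * dist j y)
          (fun j hj => mul_nonneg (hw₀ j hj) dist_nonneg) hi
    _ = c y - kuratowskiBCF y₀ y y := hc.symm
    _ ≤ dist (kuratowskiBCF y₀ y) c := by
        rw [dist_comm]
        exact (le_abs_self _).trans (Real.dist_eq _ _ ▸ c.dist_coe_le_dist y)

theorem closure_inter_convexHull_range_kuratowskiBCF_subset (y₀ : Y) :
    closure (range (kuratowskiBCF y₀)) ∩ convexHull ℝ (range (kuratowskiBCF y₀)) ⊆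
      range (kuratowskiBCF y₀) := by
  rintro c ⟨hcl, hconv⟩
  rw [convexHull_range_eq_exists_affineCombination] at hconv
  obtain ⟨s, w, hw₀, hw₁, rfl⟩ := hconv
  set κ := kuratowskiBCF y₀
  set c := s.affineCombination ℝ κ w
  obtain ⟨i, hi, hwi⟩ : ∃ i ∈ s, 0 < w i := by
    simpa using Finset.exists_lt_of_sum_lt (f := 0) (g := w) (s := s) (by simp [hw₁])
  obtain ⟨x, hx, hxc⟩ := mem_closure_iff_seq_limit.1 hcl
  have hbound : ∀ n, w i * dist (κ i) c ≤ (1 + w i) * dist (x n) c := fun n => by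
    obtain ⟨y, hy⟩ := hx n
    have hκ : dist (κ i) (κ y) = dist i y := (isometry_kuratowskiBCF y₀).dist_eq i y
    have hw := mul_dist_le_dist_kuratowskiBCF_affineCombination y₀ hw₀ hw₁ hi y
    rw [← hy]
    nlinarith [mul_le_mul_of_nonneg_left (dist_triangle (κ i) (κ y) c) hwi.le]
  have hlim : Tendsto (fun n => (1 + w i) * dist (x n) c) atTop (𝓝 0) := by
    simpa using (tendsto_iff_dist_tendsto_zero.1 hxc).const_mul (1 + w i)
  have : w i * dist (κ i) c ≤ 0 := ge_of_tendsto' hlim hbound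
  exact ⟨i, dist_le_zero.1 (nonpos_of_mul_nonpos_right this hwi)⟩

theorem isClosedEmbedding_codRestrict_kuratowskiBCF (y₀ : Y) :
    IsClosedEmbedding (codRestrict (kuratowskiBCF y₀) (convexHull ℝ (range (kuratowskiBCF y₀)))
      fun y => subset_convexHull ℝ _ (mem_range_self y)) := by
  refine ⟨(isometry_kuratowskiBCF y₀).isEmbedding.codRestrict _ _, ?_⟩
  rw [isClosed_induced_iff]
  refine ⟨closure (range (kuratowskiBCF y₀)), isClosed_closure, ?_⟩
  ext ⟨c, hc⟩
  refine ⟨fun hcl => ?_, ?_⟩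
  · obtain ⟨y, rfl⟩ := closure_inter_convexHull_range_kuratowskiBCF_subset y₀ ⟨hcl, hc⟩
    exact ⟨y, rfl⟩
  · rintro ⟨y, hy⟩
    exact subset_closure ⟨y, congrArg Subtype.val hy⟩

end Kuratowski

theorem Topology.IsClosedEmbedding.prodMk_left {X Y W : Type*} [TopologicalSpace X]
    [TopologicalSpace Y] [TopologicalSpace W] [T2Space Y] {f : X → Y} {g : X → W}
    (hg : IsClosedEmbedding g) (hf : Continuous f) : IsClosedEmbedding fun x => (f x, g x) := by
  have hgraph : IsClosedEmbedding fun x => (f x, x) := by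
    refine ⟨.of_comp (hf.prodMk continuous_id) continuous_snd .id, ?_⟩
    convert isClosed_eq (hf.comp continuous_snd) continuous_fst
    ext ⟨y, x⟩
    simp [eq_comm]
  exact (IsClosedEmbedding.id.prodMap hg).comp hgraph

section ContinuousMap

variable {X Y Z : Type*} [TopologicalSpace X] [TopologicalSpace Y] [TopologicalSpace Z]

theorem setOf_forall_prod_mem_mem_nhdsSet [CompactSpace Z] {s : Set X} {U : Set (X × Z)}
    (hU : U ∈ 𝓝ˢ (s ×ˢ univ)) : {x | ∀ z, (x, z) ∈ U} ∈ 𝓝ˢ s := by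
  rw [mem_nhdsSet_iff_forall] at hU ⊢
  intro x hx
  filter_upwards [isCompact_univ.eventually_forall_of_forall_eventually (x₀ := x)
    (P := fun x z => (x, z) ∈ U) fun z _ => hU (x, z) ⟨hx, trivial⟩] with x' hx' z
  exact hx' z trivial

theorem exists_continuous_uncurry_of_isEmbedding [LocallyCompactSpace Z] {T : Type*}
    [TopologicalSpace T] {i : T → X} (hi : IsEmbedding i) {φ : T → C(Z, Y)} (hφ : Continuous φ) :
    ∃ e : ↥(range i ×ˢ (univ : Set Z)) → Y, Continuous e ∧
      ∀ t z, e ⟨(i t, z), mem_range_self t, mem_univ z⟩ = φ t z := by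
  let h := hi.toHomeomorph
  refine ⟨fun p => φ (h.symm ⟨p.1.1, p.2.1⟩) p.1.2, ?_, fun t z =>
    congrArg (φ · z) (h.symm_apply_apply t)⟩
  exact continuous_eval.comp ((hφ.comp (h.symm.continuous.comp
    ((continuous_fst.comp continuous_subtype_val).subtype_mk _))).prodMk
    (continuous_snd.comp continuous_subtype_val))

theorem exists_continuous_curry_of_forall_mem {U : Set (X × Z)} {g : U → Y} (hg : Continuous g) :
    ∃ c : {x | ∀ z, (x, z) ∈ U} → C(Z, Y), Continuous c ∧ ∀ v z, c v z = g ⟨(v, z), v.2 z⟩ :=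
  ⟨ContinuousMap.curry ⟨fun p => g ⟨(p.1.1, p.2), p.1.2 p.2⟩,
    hg.comp (((continuous_subtype_val.comp continuous_fst).prodMk continuous_snd).subtype_mk _)⟩,
    (ContinuousMap.curry _).continuous, fun _ _ => rfl⟩

end ContinuousMap

section FiberANR

variable {B0 Y : Type u} [TopologicalSpace B0] [TopologicalSpace Y] {πY : Y → B0}

theorem IsFiberANR.exists_extension_of_extension_comp {W X : Type u} [TopologicalSpace W]
    [MetrizableSpace W] [TopologicalSpace X] {πW : W → B0} {πX : X → B0}
    (hY : IsFiberANR B0 Y πY) (hπW : Continuous πW) {j : Y → W} (hj : IsClosedEmbedding j)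
    (hjπ : ∀ y, πW (j y) = πY y) {A : Set X} {f : A → Y} {Ψ : X → W} (hΨ : Continuous Ψ)
    (hΨπ : ∀ x, πW (Ψ x) = πX x) (hΨf : ∀ a : A, Ψ a = j (f a)) :
    ∃ U ∈ 𝓝ˢ A, ∃ g : U → Y, Continuous g ∧ (∀ u : U, πY (g u) = πX u) ∧
      ∀ (a : X) (ha : a ∈ A) (hu : a ∈ U), g ⟨a, hu⟩ = f ⟨a, ha⟩ := by
  obtain ⟨V, hV, r, hr, hrj, hrπ, hrid⟩ := hY.2.2 W _ ‹_› πW hπW j hj hjπ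
  have hΨA : MapsTo Ψ A (range j) := fun a ha => ⟨f ⟨a, ha⟩, (hΨf ⟨a, ha⟩).symm⟩
  choose g hg using fun u : ↥(Ψ ⁻¹' V) => hrj ⟨Ψ u, u.2⟩
  refine ⟨Ψ ⁻¹' V, hΨ.tendsto_nhdsSet hΨA hV, g, ?_, fun u => ?_, fun a ha hu => hj.injective ?_⟩
  · rw [hj.isInducing.continuous_iff, show j ∘ g = _ from funext hg]
    exact hr.comp ((hΨ.comp continuous_subtype_val).subtype_mk _)
  · rw [← hjπ, hg, hrπ, hΨπ]
  · exact (hg _).trans ((hrid _ (hΨA ha)).trans (hΨf ⟨a, ha⟩))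

theorem IsFiberANR.isFiberANE [MetrizableSpace B0] (hY : IsFiberANR B0 Y πY) :
    IsFiberANE B0 Y πY := by
  refine ⟨hY.1, hY.2.1, fun X _ _ πX hπX A hA f hf hfπ => ?_⟩
  rcases A.eq_empty_or_nonempty with rfl | ⟨a₀, ha₀⟩
  · exact ⟨∅, by simp, isEmptyElim, continuous_of_discreteTopology, isEmptyElim,
      fun _ ha => ha.elim⟩
  have := hY.1
  let := TopologicalSpace.metrizableSpaceMetric Y
  let := TopologicalSpace.metrizableSpaceMetric X
  set κ := kuratowskiBCF (f ⟨a₀, ha₀⟩)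
  obtain ⟨G, hG, hGf, hGκ⟩ := exists_continuous_extension_mem_convexHull hA ⟨a₀, ha₀⟩
    ((isometry_kuratowskiBCF _).continuous.comp hf)
  have hGκ' : ∀ x, G x ∈ convexHull ℝ (range κ) := fun x =>
    convexHull_mono (range_comp_subset_range f κ) (hGκ x)
  exact hY.exists_extension_of_extension_comp continuous_fst
    ((isClosedEmbedding_codRestrict_kuratowskiBCF _).prodMk_left hY.2.1) (fun _ => rfl)
    (Ψ := fun x => (πX x, ⟨G x, hGκ' x⟩)) (hπX.prodMk (hG.subtype_mk _)) (fun _ => rfl)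
    fun a => Prod.ext (hfπ a).symm (Subtype.ext (hGf a))

theorem IsFiberANE.isFiberANR_fiberwiseContinuousMap {Z : Type u} [TopologicalSpace Z]
    [MetrizableSpace Z] [CompactSpace Z] [Nonempty Z] (hY : IsFiberANE B0 Y πY) :
    IsFiberANR B0 {f : C(Z, Y) // ∀ z z' : Z, πY (f z) = πY (f z')}
      (fun f => πY (f.1 (Classical.arbitrary Z))) := by
  have := hY.1
  let := TopologicalSpace.metrizableSpaceMetric Y
  refine ⟨inferInstance, hY.2.1.comp ((continuous_eval_const _).comp continuous_subtype_val),
    fun X _ _ πX hπX i hi hiπ => ?_⟩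
  obtain ⟨e, he, he_apply⟩ :=
    exists_continuous_uncurry_of_isEmbedding hi.isEmbedding continuous_subtype_val
  have heπ : ∀ p, πY (e p) = πX p.1.1 := by
    rintro ⟨⟨x, z⟩, ⟨t, rfl : i t = x⟩, -⟩
    rw [he_apply, hiπ]
    exact t.2 _ _
  obtain ⟨U, hU, g, hg, hgπ, hge⟩ := hY.2.2 (X × Z) inferInstance inferInstance
    (fun p : X × Z => πX p.1) (hπX.comp continuous_fst) _
    (hi.isClosed_range.prod isClosed_univ) e he heπ
  obtain ⟨c, hc, hc_apply⟩ := exists_continuous_curry_of_forall_mem hg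
  have hcπ : ∀ v z, πY (c v z) = πX v := fun v z => (congrArg πY (hc_apply v z)).trans (hgπ _)
  let r v : {f : C(Z, Y) // ∀ z z' : Z, πY (f z) = πY (f z')} :=
    ⟨c v, fun z z' => (hcπ v z).trans (hcπ v z').symm⟩
  refine ⟨_, setOf_forall_prod_mem_mem_nhdsSet hU, fun v => i (r v),
    hi.continuous.comp (hc.subtype_mk _), fun v => mem_range_self _,
    fun v => (hiπ _).trans (hcπ _ _), ?_⟩
  rintro ⟨x, hx⟩ ⟨t, rfl : i t = x⟩
  refine congrArg i (Subtype.ext (ContinuousMap.ext fun z => ?_))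
  exact (hc_apply _ z).trans ((hge _ ⟨mem_range_self t, trivial⟩ _).trans (he_apply t z))

end FiberANR

/-- Proposition 0.5: if `Y` is an `ANR_{B0}`-space and `Z` is a compact metric space, then the
space `C_{B0}(Z, Y)` of maps `Z → Y` whose composition with `πY` is constant, with the
compact-open topology and the projection `f ↦ πY (f z)`, is an `ANR_{B0}`-space. -/
theorem fiberANR_continuousMapSpace (B0 : Type u) [TopologicalSpace B0] [MetrizableSpace B0]
    (Y : Type u) [TopologicalSpace Y] (πY : Y → B0) (hY : IsFiberANR B0 Y πY)
    (Z : Type u) [MetricSpace Z] [CompactSpace Z] [Nonempty Z] :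
    IsFiberANR B0 {f : C(Z, Y) // ∀ z z' : Z, πY (f z) = πY (f z')}
      (fun f => πY (f.1 (Classical.arbitrary Z))) :=
  hY.isFiberANE.isFiberANR_fiberwiseContinuousMap
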